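/- If X(β) is a random point in ℝ^d with density f̃_{d,β}, then √(2β)·X(β) converges in distribution to the standard normal distribution on ℝ^d as β → +∞. -/

import Mathlib

/-!
Substituting `y = √(2β) x`, the law of `√(2β) X(β)` has density
`(2β)^(-d/2) c̃_{d,β} (1 + ‖y‖²/(2β))^(-β)`. Since `(1 + s/t)^t` increases to `e^s` (Bernoulli's
inequality), the kernel `(1 + ‖y‖²/(2β))^(-β)` decreases to `e^(-‖y‖²/2)`, so it is dominated by
its (integrable) value at a fixed `β₀ > d/2` and dominated convergence applies. The constant
tends to `(2π)^(-d/2)` because `Γ(β) / (Γ(β - a) β^a) → 1`: for `0 ≤ a ≤ 1` this is squeezed by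
Gautschi's inequality, which is log-convexity of `Γ` on `[x, x + 1]`, and the functional equation
`Γ(x + 1) = x Γ(x)` shifts `a` by one.
-/

open MeasureTheory Real Filter Topology
open scoped BoundedContinuousFunction

theorem tendsto_add_const_div_self (c : ℝ) : Tendsto (fun x => (x + c) / x) atTop (𝓝 1) := by
  have h : Tendsto (fun x : ℝ => 1 + c / x) atTop (𝓝 (1 + 0)) :=
    tendsto_const_nhds.add (tendsto_const_nhds.div_atTop tendsto_id)
  rw [add_zero] at h
  refine h.congr' ?_
  filter_upwards [eventually_ne_atTop 0] with x hx
  field_simp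

namespace Real

theorem Gamma_mul_add_mul_le_rpow_Gamma_mul_rpow_Gamma_of_nonneg {s t a b : ℝ} (hs : 0 < s)
    (ht : 0 < t) (ha : 0 ≤ a) (hb : 0 ≤ b) (hab : a + b = 1) :
    Gamma (a * s + b * t) ≤ Gamma s ^ a * Gamma t ^ b := by
  rcases ha.eq_or_lt with rfl | ha
  · obtain rfl : b = 1 := by linarith
    simp
  rcases hb.eq_or_lt with rfl | hb
  · obtain rfl : a = 1 := by linarith
    simp
  exact Gamma_mul_add_mul_le_rpow_Gamma_mul_rpow_Gamma hs ht ha hb hab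

theorem Gamma_add_le_Gamma_mul_rpow {s x : ℝ} (hs₀ : 0 ≤ s) (hs₁ : s ≤ 1) (hx : 0 < x) :
    Gamma (x + s) ≤ Gamma x * x ^ s := by
  have hΓ := Gamma_pos_of_pos hx
  calc Gamma (x + s) = Gamma ((1 - s) * x + s * (x + 1)) := by ring_nf
    _ ≤ Gamma x ^ (1 - s) * Gamma (x + 1) ^ s :=
      Gamma_mul_add_mul_le_rpow_Gamma_mul_rpow_Gamma_of_nonneg hx (by linarith) (by linarith)
        hs₀ (by ring)
    _ = Gamma x ^ (1 - s + s) * x ^ s := by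
      rw [Gamma_add_one hx.ne', mul_rpow hx.le hΓ.le, rpow_add hΓ]; ring
    _ = Gamma x * x ^ s := by norm_num

theorem mul_Gamma_le_Gamma_add_mul_rpow {s x : ℝ} (hs₀ : 0 ≤ s) (hs₁ : s ≤ 1) (hx : 0 < x) :
    x * Gamma x ≤ Gamma (x + s) * (x + s) ^ (1 - s) := by
  have hxs : 0 < x + s := by linarith
  have hΓ := Gamma_pos_of_pos hxs
  calc x * Gamma x = Gamma (s * (x + s) + (1 - s) * (x + s + 1)) := by
        rw [← Gamma_add_one hx.ne']; ring_nf
    _ ≤ Gamma (x + s) ^ s * Gamma (x + s + 1) ^ (1 - s) :=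
      Gamma_mul_add_mul_le_rpow_Gamma_mul_rpow_Gamma_of_nonneg hxs (by linarith) hs₀
        (by linarith) (by ring)
    _ = Gamma (x + s) ^ (s + (1 - s)) * (x + s) ^ (1 - s) := by
      rw [Gamma_add_one hxs.ne', mul_rpow hxs.le hΓ.le, rpow_add hΓ]; ring
    _ = Gamma (x + s) * (x + s) ^ (1 - s) := by norm_num

theorem tendsto_Gamma_add_div_Gamma_mul_rpow_of_le_one {s : ℝ} (hs₀ : 0 ≤ s) (hs₁ : s ≤ 1) :
    Tendsto (fun x => Gamma (x + s) / (Gamma x * x ^ s)) atTop (𝓝 1) := by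
  have hlower : Tendsto (fun x : ℝ => ((x + s) / x)⁻¹ ^ (1 - s)) atTop (𝓝 1) := by
    simpa using ((tendsto_add_const_div_self s).inv₀ one_ne_zero).rpow_const
      (Or.inl (by norm_num))
  refine tendsto_of_tendsto_of_tendsto_of_le_of_le' hlower tendsto_const_nhds ?_ ?_
  · filter_upwards [eventually_gt_atTop 0] with x hx
    have hxs : 0 < x + s := by linarith
    have := Gamma_pos_of_pos hx
    calc ((x + s) / x)⁻¹ ^ (1 - s) = x * Gamma x / ((x + s) ^ (1 - s) * (Gamma x * x ^ s)) := by
          rw [inv_div, div_rpow hx.le hxs.le, rpow_sub hx, rpow_one]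
          field_simp
      _ ≤ Gamma (x + s) * (x + s) ^ (1 - s) / ((x + s) ^ (1 - s) * (Gamma x * x ^ s)) := by
          gcongr ?_ / _
          exact mul_Gamma_le_Gamma_add_mul_rpow hs₀ hs₁ hx
      _ = Gamma (x + s) / (Gamma x * x ^ s) := by
          field_simp
  · filter_upwards [eventually_gt_atTop 0] with x hx
    have := Gamma_pos_of_pos hx
    rw [div_le_one (by positivity)]
    exact Gamma_add_le_Gamma_mul_rpow hs₀ hs₁ hx

theorem tendsto_Gamma_add_div_Gamma_mul_rpow_add_one {a : ℝ}
    (h : Tendsto (fun x => Gamma (x + a) / (Gamma x * x ^ a)) atTop (𝓝 1)) :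
    Tendsto (fun x => Gamma (x + (a + 1)) / (Gamma x * x ^ (a + 1))) atTop (𝓝 1) := by
  have key := h.mul (tendsto_add_const_div_self a)
  rw [one_mul] at key
  refine key.congr' ?_
  filter_upwards [eventually_gt_atTop 0, eventually_gt_atTop (-a)] with x hx hxa
  rw [← add_assoc, Gamma_add_one (by linarith : 0 < x + a).ne', rpow_add_one hx.ne']
  have := Gamma_pos_of_pos hx
  field_simp

theorem tendsto_Gamma_add_div_Gamma_mul_rpow {a : ℝ} (ha : 0 ≤ a) :
    Tendsto (fun x => Gamma (x + a) / (Gamma x * x ^ a)) atTop (𝓝 1) := by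
  obtain ⟨n, hn⟩ := exists_nat_ge a
  induction n generalizing a with
  | zero => exact tendsto_Gamma_add_div_Gamma_mul_rpow_of_le_one ha (by simp at hn; linarith)
  | succ n ih =>
    rcases le_or_gt a 1 with h | h
    · exact tendsto_Gamma_add_div_Gamma_mul_rpow_of_le_one ha h
    · simpa using tendsto_Gamma_add_div_Gamma_mul_rpow_add_one
        (ih (a := a - 1) (by linarith) (by push_cast at hn; linarith))

theorem tendsto_Gamma_div_Gamma_sub_mul_rpow {a : ℝ} (ha : 0 ≤ a) :
    Tendsto (fun x => Gamma x / (Gamma (x - a) * x ^ a)) atTop (𝓝 1) := by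
  have hshift := (tendsto_Gamma_add_div_Gamma_mul_rpow ha).comp
    (tendsto_atTop_add_const_right atTop (-a) tendsto_id)
  have hpow := (tendsto_add_const_div_self (-a)).rpow_const (p := a) (Or.inl one_ne_zero)
  rw [one_rpow] at hpow
  have hlim : Tendsto (fun x => Gamma x / (Gamma (x - a) * (x - a) ^ a) * ((x - a) / x) ^ a)
      atTop (𝓝 1) := by
    simpa [← sub_eq_add_neg] using hshift.mul hpow
  refine hlim.congr' ?_
  filter_upwards [eventually_gt_atTop a, eventually_gt_atTop 0] with x hxa hx
  have hxa : 0 < x - a := by linarith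
  have := Gamma_pos_of_pos hxa
  rw [div_rpow hxa.le hx.le]
  have := rpow_pos_of_pos hxa a
  field_simp

theorem tendsto_two_mul_rpow_neg_mul_Gamma_div {a : ℝ} (ha : 0 ≤ a) :
    Tendsto (fun β => (2 * β) ^ (-a) * (Gamma β / (π ^ a * Gamma (β - a)))) atTop
      (𝓝 ((2 * π) ^ (-a))) := by
  have h := (tendsto_Gamma_div_Gamma_sub_mul_rpow ha).const_mul ((2 * π) ^ (-a))
  rw [mul_one] at h
  refine h.congr' ?_
  filter_upwards [eventually_gt_atTop a, eventually_gt_atTop 0] with β hβa hβ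
  have := Gamma_pos_of_pos (sub_pos.2 hβa)
  have := rpow_pos_of_pos hβ a
  have := rpow_pos_of_pos pi_pos a
  rw [mul_rpow two_pos.le hβ.le, mul_rpow two_pos.le pi_pos.le, rpow_neg two_pos.le,
    rpow_neg hβ.le, rpow_neg pi_pos.le]
  field_simp

end Real

theorem one_add_div_rpow_neg_le {s u v : ℝ} (hs : 0 ≤ s) (hu : 0 < u) (huv : u ≤ v) :
    (1 + s / v) ^ (-v) ≤ (1 + s / u) ^ (-u) := by
  have hv : 0 < v := hu.trans_le huv
  have hbernoulli : 1 + v / u * (s / v) ≤ (1 + s / v) ^ (v / u) :=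
    one_add_mul_self_le_rpow_one_add (by linarith [div_nonneg hs hv.le])
      ((one_le_div hu).2 huv)
  rw [show v / u * (s / v) = s / u by field_simp] at hbernoulli
  have hmono : (1 + s / u) ^ u ≤ (1 + s / v) ^ v := by
    calc (1 + s / u) ^ u ≤ ((1 + s / v) ^ (v / u)) ^ u := by gcongr
      _ = (1 + s / v) ^ v := by rw [← rpow_mul (by positivity), div_mul_cancel₀ _ hu.ne']
  rw [rpow_neg (by positivity), rpow_neg (by positivity)]
  exact inv_anti₀ (by positivity) hmono

theorem tendsto_one_add_div_rpow_neg (s : ℝ) :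
    Tendsto (fun t => (1 + s / t) ^ (-t)) atTop (𝓝 (exp (-s))) := by
  rw [exp_neg]
  refine ((tendsto_one_add_div_rpow_exp s).inv₀ (exp_ne_zero s)).congr' ?_
  filter_upwards [eventually_gt_atTop |s|] with t ht
  have hst : 0 ≤ 1 + s / t := by
    have : -1 ≤ s / t := by
      rw [le_div_iff₀ (by linarith [abs_nonneg s])]; linarith [neg_abs_le s]
    linarith
  rw [rpow_neg hst]

theorem norm_inv_sqrt_smul_sq {E : Type*} [SeminormedAddCommGroup E] [NormedSpace ℝ E]
    {t : ℝ} (ht : 0 ≤ t) (y : E) : ‖(√t)⁻¹ • y‖ ^ 2 = ‖y‖ ^ 2 / t := by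
  rw [norm_smul, mul_pow, norm_inv, norm_of_nonneg (sqrt_nonneg t), inv_pow, sq_sqrt ht,
    inv_mul_eq_div]

theorem integral_withDensity_ofReal {α : Type*} [MeasurableSpace α] {μ : Measure α}
    {ρ : α → ℝ} (hρ : Measurable ρ) (hρ₀ : ∀ x, 0 ≤ ρ x) (φ : α → ℝ) :
    ∫ x, φ x ∂(μ.withDensity fun x => ENNReal.ofReal (ρ x)) = ∫ x, ρ x * φ x ∂μ := by
  rw [integral_withDensity_eq_integral_toReal_smul hρ.ennreal_ofReal
    (ae_of_all _ fun _ => ENNReal.ofReal_lt_top)]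
  simp_rw [ENNReal.toReal_ofReal (hρ₀ _), smul_eq_mul]

section HaarMeasure

variable {E : Type*} [NormedAddCommGroup E] [NormedSpace ℝ E] [FiniteDimensional ℝ E]
  [MeasurableSpace E] [BorelSpace E] (μ : Measure E) [μ.IsAddHaarMeasure]

theorem integrable_one_add_norm_sq_div_rpow_neg {β : ℝ}
    (hβ : (Module.finrank ℝ E : ℝ) < 2 * β) :
    Integrable (fun y : E => (1 + ‖y‖ ^ 2 / (2 * β)) ^ (-β)) μ := by
  have h2β : 0 < 2 * β := (Nat.cast_nonneg _).trans_lt hβ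
  refine ((integrable_rpow_neg_one_add_norm_sq (μ := μ) hβ).comp_smul
    (inv_ne_zero (sqrt_pos.2 h2β).ne')).congr (ae_of_all _ fun y => ?_)
  simp only [norm_inv_sqrt_smul_sq h2β.le]
  ring_nf

theorem tendsto_integral_one_add_norm_sq_div_rpow_neg_mul (g : E →ᵇ ℝ) :
    Tendsto (fun β => ∫ y, (1 + ‖y‖ ^ 2 / (2 * β)) ^ (-β) * g y ∂μ) atTop
      (𝓝 (∫ y, exp (-‖y‖ ^ 2 / 2) * g y ∂μ)) := by
  set β₀ : ℝ := Module.finrank ℝ E / 2 + 1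
  have hβ₀ : 0 < β₀ := by positivity
  have hβ₀E : (Module.finrank ℝ E : ℝ) < 2 * β₀ := by simp only [β₀]; linarith
  refine tendsto_integral_filter_of_dominated_convergence
    (fun y => (1 + ‖y‖ ^ 2 / (2 * β₀)) ^ (-β₀) * ‖g‖)
    (.of_forall fun β => (by fun_prop : Measurable _).aestronglyMeasurable) ?_
    ((integrable_one_add_norm_sq_div_rpow_neg μ hβ₀E).mul_const _)
    (ae_of_all _ fun y => ?_)
  · filter_upwards [eventually_ge_atTop β₀] with β hβ
    refine ae_of_all _ fun y => ?_
    have : 0 < β := hβ₀.trans_le hβ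
    rw [norm_mul, norm_of_nonneg (by positivity), ← div_div, ← div_div]
    gcongr
    · exact one_add_div_rpow_neg_le (by positivity) hβ₀ hβ
    · exact g.norm_coe_le_norm y
  · simp_rw [← div_div, neg_div]
    exact (tendsto_one_add_div_rpow_neg _).mul_const _

theorem integral_map_smul_withDensity_ofReal {ρ : E → ℝ} (hρ : Measurable ρ)
    (hρ₀ : ∀ x, 0 ≤ ρ x) (g : E → ℝ) {R : ℝ} (hR : R ≠ 0) :
    ∫ x, g x ∂((μ.withDensity fun x => ENNReal.ofReal (ρ x)).map (R • ·)) =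
      |(R ^ Module.finrank ℝ E)⁻¹| * ∫ y, ρ (R⁻¹ • y) * g y ∂μ := by
  rw [(measurableEmbedding_const_smul₀ hR).integral_map, integral_withDensity_ofReal hρ hρ₀,
    ← smul_eq_mul, ← Measure.integral_comp_smul]
  simp_rw [inv_smul_smul₀ hR]

theorem integral_map_sqrt_smul_withDensity_rpow_neg {β c : ℝ} (hβ : 0 < β) (hc : 0 ≤ c)
    (g : E → ℝ) :
    ∫ x, g x ∂((μ.withDensity fun x => ENNReal.ofReal (c * (1 + ‖x‖ ^ 2) ^ (-β))).map
        (√(2 * β) • ·)) =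
      (2 * β) ^ (-(Module.finrank ℝ E : ℝ) / 2) * c *
        ∫ y, (1 + ‖y‖ ^ 2 / (2 * β)) ^ (-β) * g y ∂μ := by
  have h2β : 0 < 2 * β := by positivity
  have hjac :
      |(√(2 * β) ^ Module.finrank ℝ E)⁻¹| = (2 * β) ^ (-(Module.finrank ℝ E : ℝ) / 2) := by
    rw [sqrt_eq_rpow, ← rpow_natCast, ← rpow_mul h2β.le, abs_of_nonneg (by positivity),
      ← rpow_neg h2β.le]
    ring_nf
  rw [integral_map_smul_withDensity_ofReal μ (by fun_prop) (fun x => by positivity) g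
    (sqrt_pos.2 h2β).ne', hjac]
  simp_rw [norm_inv_sqrt_smul_sq h2β.le, mul_assoc, integral_const_mul]

end HaarMeasure

theorem betaPrime_rescaled_tendsto_gaussian_general (d : ℕ)
    (μ : ℝ → Measure (EuclideanSpace ℝ (Fin d)))
    (hμ : ∀ β : ℝ, (d : ℝ) / 2 < β → μ β = volume.withDensity (fun x =>
      ENNReal.ofReal
        ((Real.Gamma β / (Real.pi ^ ((d : ℝ) / 2) * Real.Gamma (β - (d : ℝ) / 2))) *
          (1 + ‖x‖ ^ 2) ^ (-β))))
    (γ : Measure (EuclideanSpace ℝ (Fin d)))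
    (hγ : γ = volume.withDensity (fun x =>
      ENNReal.ofReal ((2 * Real.pi) ^ (-(d : ℝ) / 2) * Real.exp (-‖x‖ ^ 2 / 2)))) :
    ∀ g : BoundedContinuousFunction (EuclideanSpace ℝ (Fin d)) ℝ,
      Tendsto (fun β : ℝ => ∫ x, g x ∂((μ β).map (fun x => Real.sqrt (2 * β) • x)))
        atTop (nhds (∫ x, g x ∂γ)) := by
  intro g
  have hγg : ∫ x, g x ∂γ = (2 * π) ^ (-((d : ℝ) / 2)) * ∫ y, exp (-‖y‖ ^ 2 / 2) * g y := by
    rw [hγ, integral_withDensity_ofReal (by fun_prop) (fun _ => by positivity), neg_div,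
      ← integral_const_mul]
    simp_rw [mul_assoc]
  have hμg : ∀ β, (d : ℝ) / 2 < β →
      ∫ x, g x ∂((μ β).map (fun x => √(2 * β) • x)) =
        (2 * β) ^ (-((d : ℝ) / 2)) * (Gamma β / (π ^ ((d : ℝ) / 2) * Gamma (β - d / 2))) *
          ∫ y, (1 + ‖y‖ ^ 2 / (2 * β)) ^ (-β) * g y := by
    intro β hβ
    have hβ₀ : 0 < β := lt_of_le_of_lt (by positivity) hβ
    have hc : 0 ≤ Gamma β / (π ^ ((d : ℝ) / 2) * Gamma (β - d / 2)) :=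
      div_nonneg (Gamma_pos_of_pos hβ₀).le
        (mul_pos (rpow_pos_of_pos pi_pos _) (Gamma_pos_of_pos (sub_pos.2 hβ))).le
    rw [hμ β hβ, integral_map_sqrt_smul_withDensity_rpow_neg _ hβ₀ hc,
      finrank_euclideanSpace_fin, neg_div]
  rw [hγg]
  refine ((tendsto_two_mul_rpow_neg_mul_Gamma_div (by positivity)).mul
    (tendsto_integral_one_add_norm_sq_div_rpow_neg_mul volume g)).congr' ?_
  filter_upwards [eventually_gt_atTop ((d : ℝ) / 2)] with β hβ
  exact (hμg β hβ).symm

/-- If `X(β)` has the beta' density `f̃_{d,β}`, then `√(2β) X(β)` converges in distribution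
(i.e. weakly, tested against bounded continuous functions) to the standard normal
distribution on `ℝ^d`, as `β → +∞`. -/
theorem betaPrime_rescaled_tendsto_gaussian (d : ℕ) (hd : 1 ≤ d)
    (μ : ℝ → Measure (EuclideanSpace ℝ (Fin d)))
    (hμ : ∀ β : ℝ, (d : ℝ) / 2 < β → μ β = volume.withDensity (fun x =>
      ENNReal.ofReal
        ((Real.Gamma β / (Real.pi ^ ((d : ℝ) / 2) * Real.Gamma (β - (d : ℝ) / 2))) *
          (1 + ‖x‖ ^ 2) ^ (-β))))
    (γ : Measure (EuclideanSpace ℝ (Fin d)))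
    (hγ : γ = volume.withDensity (fun x =>
      ENNReal.ofReal ((2 * Real.pi) ^ (-(d : ℝ) / 2) * Real.exp (-‖x‖ ^ 2 / 2)))) :
    ∀ g : BoundedContinuousFunction (EuclideanSpace ℝ (Fin d)) ℝ,
      Tendsto (fun β : ℝ => ∫ x, g x ∂((μ β).map (fun x => Real.sqrt (2 * β) • x)))
        atTop (nhds (∫ x, g x ∂γ)) :=
  betaPrime_rescaled_tendsto_gaussian_general d μ hμ γ hγ
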